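/- If every separated Bessel sequence of unit vectors in a Hilbert space can be partitioned into finitely many Riesz sequences (WFC), then every Bessel sequence of unit vectors can be partitioned into finitely many Riesz sequences (FC'). -/

import Mathlib

/-!
For a Bessel sequence of unit vectors with bound `B`, the dual Bessel inequality
`∑ₖ |⟪xₖ, xₙ⟫|² ≤ B` shows that each `xₙ` has at most `4B` partners `xₖ` with
`|⟪xₙ, xₖ⟫| > 1/2`. The graph of such pairs is therefore greedily colourable with finitely many
colours, and every colour class is `1/2`-separated. WFC speaks only of sequences indexed by all
of `ℕ`, so a colour class `S` is completed by an orthonormal sequence of `ℓ²(ℕ)` placed off `S`,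
in the orthogonal sum `H ⊕ ℓ²(ℕ)`: the result is still a separated Bessel sequence of unit
vectors, and its Riesz partition restricts to one of `x` on `S`. Refining the colouring by these
partitions gives FC'.
-/

open Finset
open scoped InnerProductSpace

section Bessel

variable (𝕜 : Type*) {E F : Type*} [RCLike 𝕜] [NormedAddCommGroup E] [InnerProductSpace 𝕜 E]
  [NormedAddCommGroup F] [InnerProductSpace 𝕜 F]

def IsBesselSeq (x : ℕ → E) (B : ℝ) : Prop :=
  ∀ (s : Finset ℕ) (a : ℕ → 𝕜), ‖∑ n ∈ s, a n • x n‖ ^ 2 ≤ B * ∑ n ∈ s, ‖a n‖ ^ 2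

def IsRieszOn (x : ℕ → E) (S : Set ℕ) : Prop :=
  ∃ A > 0, ∃ B > 0, ∀ (s : Finset ℕ) (a : ℕ → 𝕜), (∀ n ∈ s, n ∈ S) →
    A * ∑ n ∈ s, ‖a n‖ ^ 2 ≤ ‖∑ n ∈ s, a n • x n‖ ^ 2 ∧
    ‖∑ n ∈ s, a n • x n‖ ^ 2 ≤ B * ∑ n ∈ s, ‖a n‖ ^ 2

variable {𝕜} {x : ℕ → E} {B : ℝ}

theorem IsRieszOn.mono {S T : Set ℕ} (h : IsRieszOn 𝕜 x S) (hTS : T ⊆ S) : IsRieszOn 𝕜 x T := by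
  obtain ⟨A, hA, B, hB, hAB⟩ := h
  exact ⟨A, hA, B, hB, fun s a hs => hAB s a fun n hn => hTS (hs n hn)⟩

theorem IsBesselSeq.nonneg (hx : IsBesselSeq 𝕜 x B) : 0 ≤ B := by
  have h := hx {0} 1
  simp only [sum_singleton, Pi.one_apply, one_smul, norm_one, one_pow, mul_one] at h
  exact (sq_nonneg _).trans h

theorem IsBesselSeq.sum_norm_inner_sq_le (hx : IsBesselSeq 𝕜 x B) (y : E) (s : Finset ℕ) :
    ∑ k ∈ s, ‖⟪x k, y⟫_𝕜‖ ^ 2 ≤ B * ‖y‖ ^ 2 := by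
  set t := ∑ k ∈ s, ‖⟪x k, y⟫_𝕜‖ ^ 2
  set v := ∑ k ∈ s, ⟪x k, y⟫_𝕜 • x k
  have ht : 0 ≤ t := sum_nonneg fun _ _ => sq_nonneg _
  have hvy : ⟪v, y⟫_𝕜 = t := by
    simp only [v, t, sum_inner, inner_smul_left, RCLike.conj_mul]
    push_cast
    rfl
  have htv : t ≤ ‖v‖ * ‖y‖ := by
    simpa [hvy, abs_of_nonneg ht] using norm_inner_le_norm (𝕜 := 𝕜) v y
  have hvB : ‖v‖ ^ 2 ≤ B * t := hx s _
  have hsq : t * t ≤ t * (B * ‖y‖ ^ 2) :=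
    calc t * t ≤ (‖v‖ * ‖y‖) ^ 2 := by rw [sq]; exact mul_le_mul htv htv ht (by positivity)
      _ = ‖v‖ ^ 2 * ‖y‖ ^ 2 := mul_pow _ _ _
      _ ≤ B * t * ‖y‖ ^ 2 := by gcongr
      _ = t * (B * ‖y‖ ^ 2) := by ring
  rcases ht.eq_or_lt with h0 | hpos
  · rw [← h0]; exact mul_nonneg hx.nonneg (sq_nonneg _)
  · exact le_of_mul_le_mul_left hsq hpos

theorem IsBesselSeq.card_mul_sq_le (hx : IsBesselSeq 𝕜 x B) (y : E) {t : Finset ℕ} {δ : ℝ}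
    (hδ : 0 ≤ δ) (ht : ∀ k ∈ t, δ ≤ ‖⟪x k, y⟫_𝕜‖) : #t * δ ^ 2 ≤ B * ‖y‖ ^ 2 := by
  calc #t * δ ^ 2 = #t • δ ^ 2 := (nsmul_eq_mul _ _).symm
    _ ≤ ∑ k ∈ t, ‖⟪x k, y⟫_𝕜‖ ^ 2 :=
      card_nsmul_le_sum _ _ _ fun k hk => pow_le_pow_left₀ hδ (ht k hk) 2
    _ ≤ B * ‖y‖ ^ 2 := hx.sum_norm_inner_sq_le y t

theorem IsBesselSeq.indicator (hx : IsBesselSeq 𝕜 x B) (S : Set ℕ) :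
    IsBesselSeq 𝕜 (S.indicator x) B := by
  intro s a
  have hsum : ∑ n ∈ s, a n • S.indicator x n = ∑ n ∈ s, S.indicator a n • x n :=
    sum_congr rfl fun n _ => by by_cases hn : n ∈ S <;> simp [hn]
  calc ‖∑ n ∈ s, a n • S.indicator x n‖ ^ 2 ≤ B * ∑ n ∈ s, ‖S.indicator a n‖ ^ 2 :=
        hsum ▸ hx s _
    _ ≤ B * ∑ n ∈ s, ‖a n‖ ^ 2 := by
      gcongr with n
      · exact hx.nonneg
      · exact norm_indicator_le_norm_self _ _

theorem Orthonormal.norm_sum_smul_sq {e : ℕ → E} (he : Orthonormal 𝕜 e) (s : Finset ℕ)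
    (a : ℕ → 𝕜) : ‖∑ n ∈ s, a n • e n‖ ^ 2 = ∑ n ∈ s, ‖a n‖ ^ 2 := by
  rw [← RCLike.ofReal_inj (K := 𝕜), RCLike.ofReal_pow, ← inner_self_eq_norm_sq_to_K,
    he.inner_sum]
  simp [RCLike.conj_mul]

theorem Orthonormal.isBesselSeq {e : ℕ → E} (he : Orthonormal 𝕜 e) : IsBesselSeq 𝕜 e 1 :=
  fun s a => by rw [he.norm_sum_smul_sq, one_mul]

theorem norm_sum_smul_toLp_sq (u : ℕ → E) (v : ℕ → F) (s : Finset ℕ) (a : ℕ → 𝕜) :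
    ‖∑ n ∈ s, a n • WithLp.toLp 2 (u n, v n)‖ ^ 2 =
      ‖∑ n ∈ s, a n • u n‖ ^ 2 + ‖∑ n ∈ s, a n • v n‖ ^ 2 := by
  rw [WithLp.prod_norm_sq_eq_of_L2]
  simp [← WithLp.toLp_smul, ← WithLp.toLp_sum, Prod.fst_sum, Prod.snd_sum]

theorem IsBesselSeq.toLp_prod {u : ℕ → E} {v : ℕ → F} {B' : ℝ} (hu : IsBesselSeq 𝕜 u B)
    (hv : IsBesselSeq 𝕜 v B') : IsBesselSeq 𝕜 (fun n => WithLp.toLp 2 (u n, v n)) (B + B') :=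
  fun s a => by rw [norm_sum_smul_toLp_sq, add_mul]; exact add_le_add (hu s a) (hv s a)

end Bessel

section Padding

variable {𝕜 E F : Type*} [RCLike 𝕜] [NormedAddCommGroup E] [InnerProductSpace 𝕜 E]
  [NormedAddCommGroup F] [InnerProductSpace 𝕜 F] {x : ℕ → E} {e : ℕ → F} {S : Set ℕ}

noncomputable def padOutside (x : ℕ → E) (e : ℕ → F) (S : Set ℕ) (n : ℕ) : WithLp 2 (E × F) :=
  WithLp.toLp 2 (S.indicator x n, Sᶜ.indicator e n)

theorem norm_padOutside (hx : ∀ n ∈ S, ‖x n‖ = 1) (he : ∀ n, ‖e n‖ = 1) (n : ℕ) :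
    ‖padOutside x e S n‖ = 1 := by
  rw [← pow_eq_one_iff_of_nonneg (norm_nonneg _) two_ne_zero, padOutside,
    WithLp.prod_norm_sq_eq_of_L2]
  by_cases hn : n ∈ S <;> simp [hn, hx, he]

theorem IsBesselSeq.padOutside {B : ℝ} (hx : IsBesselSeq 𝕜 x B) (he : Orthonormal 𝕜 e)
    (S : Set ℕ) : IsBesselSeq 𝕜 (padOutside x e S) (B + 1) :=
  (hx.indicator S).toLp_prod (he.isBesselSeq.indicator Sᶜ)

theorem norm_inner_padOutside_le (he : Orthonormal 𝕜 e) {γ : ℝ} (hγ : 0 ≤ γ)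
    (hsep : ∀ n ∈ S, ∀ k ∈ S, n ≠ k → ‖⟪x n, x k⟫_𝕜‖ ≤ γ) {n k : ℕ} (hnk : n ≠ k) :
    ‖⟪padOutside x e S n, padOutside x e S k⟫_𝕜‖ ≤ γ := by
  by_cases hn : n ∈ S <;> by_cases hk : k ∈ S
  · simpa [padOutside, hn, hk] using hsep n hn k hk hnk
  all_goals simp [padOutside, hn, hk, hγ, he.inner_eq_zero hnk]

theorem norm_sum_smul_padOutside {s : Finset ℕ} (hs : ∀ n ∈ s, n ∈ S) (a : ℕ → 𝕜) :
    ‖∑ n ∈ s, a n • padOutside x e S n‖ = ‖∑ n ∈ s, a n • x n‖ := by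
  have hfst : ∑ n ∈ s, a n • S.indicator x n = ∑ n ∈ s, a n • x n :=
    sum_congr rfl fun n hn => by rw [Set.indicator_of_mem (hs n hn)]
  have hsnd : ∑ n ∈ s, a n • Sᶜ.indicator e n = 0 :=
    sum_eq_zero fun n hn => by rw [Set.indicator_of_notMem (not_not.mpr (hs n hn)), smul_zero]
  rw [← sq_eq_sq₀ (norm_nonneg _) (norm_nonneg _)]
  simp only [padOutside]
  rw [norm_sum_smul_toLp_sq, hfst, hsnd, norm_zero, zero_pow two_ne_zero, add_zero]

theorem IsRieszOn.of_padOutside {T : Set ℕ} (h : IsRieszOn 𝕜 (padOutside x e S) T) :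
    IsRieszOn 𝕜 x (S ∩ T) := by
  obtain ⟨A, hA, B, hB, hAB⟩ := h
  refine ⟨A, hA, B, hB, fun s a hs => ?_⟩
  rw [← norm_sum_smul_padOutside (e := e) (fun n hn => (hs n hn).1)]
  exact hAB s a fun n hn => (hs n hn).2

end Padding

namespace SimpleGraph

noncomputable def greedyColoring (G : SimpleGraph ℕ) (D : ℕ) : ℕ → Fin (D + 1)
  | n => Classical.epsilon fun c => ∀ k (_ : k < n), G.Adj n k → greedyColoring G D k ≠ c

theorem greedyColoring_ne {G : SimpleGraph ℕ} {D : ℕ}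
    (hdeg : ∀ n (t : Finset ℕ), (∀ k ∈ t, G.Adj n k) → #t ≤ D) {n k : ℕ} (hkn : k < n)
    (hadj : G.Adj n k) : G.greedyColoring D k ≠ G.greedyColoring D n := by
  classical
  have hfree : ∃ c, ∀ k < n, G.Adj n k → G.greedyColoring D k ≠ c := by
    set back := {k ∈ range n | G.Adj n k}
    have hused : #(back.image (G.greedyColoring D)) < #(univ : Finset (Fin (D + 1))) := by
      calc #(back.image (G.greedyColoring D)) ≤ #back := card_image_le
        _ ≤ D := hdeg n back fun k hk => (mem_filter.mp hk).2
        _ < #(univ : Finset (Fin (D + 1))) := by simp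
    obtain ⟨c, -, hc⟩ := exists_mem_notMem_of_card_lt_card hused
    refine ⟨c, fun k hk hadj hkc => hc (mem_image.mpr ⟨k, ?_, hkc⟩)⟩
    exact mem_filter.mpr ⟨mem_range.mpr hk, hadj⟩
  rw [greedyColoring.eq_def G D n]
  exact Classical.epsilon_spec (p := fun c => ∀ k < n, G.Adj n k → G.greedyColoring D k ≠ c)
    hfree k hkn hadj

theorem colorable_of_forall_card_le {G : SimpleGraph ℕ} {D : ℕ}
    (hdeg : ∀ n (t : Finset ℕ), (∀ k ∈ t, G.Adj n k) → #t ≤ D) : G.Colorable (D + 1) := by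
  refine ⟨Coloring.mk (G.greedyColoring D) fun {n k} hadj => ?_⟩
  rcases lt_or_gt_of_ne (G.ne_of_adj hadj) with hnk | hkn
  · exact greedyColoring_ne hdeg hnk hadj.symm
  · exact (greedyColoring_ne hdeg hkn hadj).symm

end SimpleGraph

theorem IsBesselSeq.exists_separated_partition {𝕜 E : Type*} [RCLike 𝕜] [NormedAddCommGroup E]
    [InnerProductSpace 𝕜 E] {x : ℕ → E} {B : ℝ} (hx : IsBesselSeq 𝕜 x B)
    (hx1 : ∀ n, ‖x n‖ ≤ 1) {δ : ℝ} (hδ : 0 < δ) :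
    ∃ (N : ℕ) (col : ℕ → Fin N), ∀ n k, n ≠ k → col n = col k → ‖⟪x n, x k⟫_𝕜‖ ≤ δ := by
  let G := SimpleGraph.fromRel fun n k => δ < ‖⟪x n, x k⟫_𝕜‖
  have hdeg : ∀ n (t : Finset ℕ), (∀ k ∈ t, G.Adj n k) → #t ≤ ⌊B / δ ^ 2⌋₊ := by
    intro n t ht
    have hnear : ∀ k ∈ t, δ ≤ ‖⟪x k, x n⟫_𝕜‖ := fun k hk => by
      obtain ⟨-, h | h⟩ := SimpleGraph.fromRel_adj _ n k |>.mp (ht k hk)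
      · rw [norm_inner_symm]; exact h.le
      · exact h.le
    have hcard := hx.card_mul_sq_le (x n) hδ.le hnear
    refine Nat.le_floor ((le_div_iff₀ (by positivity)).mpr (hcard.trans ?_))
    simpa using mul_le_of_le_one_right hx.nonneg (pow_le_one₀ (norm_nonneg _) (hx1 n))
  obtain ⟨C⟩ := SimpleGraph.colorable_of_forall_card_le hdeg
  refine ⟨_, C, fun n k hnk hc => not_lt.mp fun hfar => C.valid ?_ hc⟩
  exact (SimpleGraph.fromRel_adj _ n k).mpr ⟨hnk, Or.inl hfar⟩

theorem exists_fin_rieszOn_partition {𝕜 E ι : Type*} [RCLike 𝕜] [NormedAddCommGroup E]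
    [InnerProductSpace 𝕜 E] [Fintype ι] {x : ℕ → E} (col : ℕ → ι)
    (h : ∀ i, ∃ (N : ℕ) (f : ℕ → Fin N), ∀ c, IsRieszOn 𝕜 x ({n | col n = i} ∩ {n | f n = c})) :
    ∃ (N : ℕ) (f : ℕ → Fin N), ∀ c, IsRieszOn 𝕜 x {n | f n = c} := by
  choose N f hf using h
  let e := Fintype.equivFin (Σ i, Fin (N i))
  refine ⟨_, fun n => e ⟨col n, f (col n) n⟩, fun c => ?_⟩
  obtain ⟨⟨i, j⟩, hc⟩ : ∃ p, e.symm c = p := ⟨_, rfl⟩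
  refine (hf i j).mono fun n hn => ?_
  have hij : (⟨col n, f (col n) n⟩ : Σ i, Fin (N i)) = ⟨i, j⟩ := by
    rw [← hc, ← hn.out, Equiv.symm_apply_apply]
  obtain ⟨hi, hj⟩ := Sigma.mk.inj_iff.mp hij
  generalize hm : col n = m at hi hj
  subst hi
  exact ⟨hm, eq_of_heq hj⟩

def WeakFeichtingerProperty : Prop :=
  ∀ (H : Type) (_ : NormedAddCommGroup H) (_ : @InnerProductSpace ℂ H _ _)
    (_ : CompleteSpace H) (x : ℕ → H), (∀ n, ‖x n‖ = 1) → (∃ B > 0, IsBesselSeq ℂ x B) →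
    (∃ γ < (1 : ℝ), ∀ n k : ℕ, n ≠ k → ‖⟪x n, x k⟫_ℂ‖ ≤ γ) →
    ∃ (N : ℕ) (f : ℕ → Fin N), ∀ c, IsRieszOn ℂ x {n | f n = c}

theorem WeakFeichtingerProperty.exists_rieszOn_partition_of_separatedOn
    (hWFC : WeakFeichtingerProperty) {H : Type} [NormedAddCommGroup H] [InnerProductSpace ℂ H]
    [CompleteSpace H] {x : ℕ → H} {B : ℝ} (hB : IsBesselSeq ℂ x B) {S : Set ℕ}
    (hx : ∀ n ∈ S, ‖x n‖ = 1) {γ : ℝ} (hγ : γ < 1)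
    (hsep : ∀ n ∈ S, ∀ k ∈ S, n ≠ k → ‖⟪x n, x k⟫_ℂ‖ ≤ γ) :
    ∃ (N : ℕ) (f : ℕ → Fin N), ∀ c, IsRieszOn ℂ x (S ∩ {n | f n = c}) := by
  let e : HilbertBasis ℕ ℂ (lp (fun _ : ℕ => ℂ) 2) := default
  obtain ⟨N, f, hf⟩ := hWFC _ inferInstance inferInstance inferInstance (padOutside x e S)
    (norm_padOutside hx e.orthonormal.1)
    ⟨B + 1, by linarith [hB.nonneg], hB.padOutside e.orthonormal S⟩
    ⟨max γ 0, max_lt hγ one_pos, fun n k hnk => norm_inner_padOutside_le e.orthonormal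
      (le_max_right γ 0) (fun n hn k hk hnk => (hsep n hn k hk hnk).trans (le_max_left γ 0)) hnk⟩
  exact ⟨N, f, fun c => (hf c).of_padOutside⟩

theorem WFC_implies_FC' :
    (∀ (H : Type) (_ : NormedAddCommGroup H) (_ : @InnerProductSpace ℂ H _ _)
        (_ : CompleteSpace H) (x : ℕ → H),
        (∀ n, ‖x n‖ = 1) →
        (∃ B > 0, ∀ (s : Finset ℕ) (a : ℕ → ℂ),
            ‖∑ n ∈ s, a n • x n‖ ^ 2 ≤ B * ∑ n ∈ s, ‖a n‖ ^ 2) →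
        (∃ γ < (1 : ℝ), ∀ n k : ℕ, n ≠ k → ‖(inner ℂ (x n) (x k) : ℂ)‖ ≤ γ) →
        ∃ (N : ℕ) (f : ℕ → Fin N), ∀ c : Fin N,
          ∃ A > 0, ∃ B > 0, ∀ (s : Finset ℕ) (a : ℕ → ℂ), (∀ n ∈ s, f n = c) →
            A * ∑ n ∈ s, ‖a n‖ ^ 2 ≤ ‖∑ n ∈ s, a n • x n‖ ^ 2 ∧
            ‖∑ n ∈ s, a n • x n‖ ^ 2 ≤ B * ∑ n ∈ s, ‖a n‖ ^ 2) →
    (∀ (H : Type) (_ : NormedAddCommGroup H) (_ : @InnerProductSpace ℂ H _ _)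
        (_ : CompleteSpace H) (x : ℕ → H),
        (∀ n, ‖x n‖ = 1) →
        (∃ B > 0, ∀ (s : Finset ℕ) (a : ℕ → ℂ),
            ‖∑ n ∈ s, a n • x n‖ ^ 2 ≤ B * ∑ n ∈ s, ‖a n‖ ^ 2) →
        ∃ (N : ℕ) (f : ℕ → Fin N), ∀ c : Fin N,
          ∃ A > 0, ∃ B > 0, ∀ (s : Finset ℕ) (a : ℕ → ℂ), (∀ n ∈ s, f n = c) →
            A * ∑ n ∈ s, ‖a n‖ ^ 2 ≤ ‖∑ n ∈ s, a n • x n‖ ^ 2 ∧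
            ‖∑ n ∈ s, a n • x n‖ ^ 2 ≤ B * ∑ n ∈ s, ‖a n‖ ^ 2) := by
  rintro hWFC H _ _ _ x hx ⟨B, -, hB⟩
  obtain ⟨M, col, hcol⟩ :=
    IsBesselSeq.exists_separated_partition (𝕜 := ℂ) hB (fun n => (hx n).le) one_half_pos
  exact exists_fin_rieszOn_partition col fun i =>
    WeakFeichtingerProperty.exists_rieszOn_partition_of_separatedOn hWFC hB
      (fun n _ => hx n) one_half_lt_one fun n hn k hk hnk => hcol n k hnk (hn.trans hk.symm)
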